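/- Let φ_i, φ be proper lower semi-continuous convex functions on ℝⁿ such that the Legendre transforms satisfy φ_i* ↓ φ* pointwise (decreasing in i, converging to φ*). Then φ_i ↑ φ pointwise. -/

import Mathlib

/-!
Each proper lower semicontinuous convex function equals its biconjugate (Fenchel–Moreau): a point
strictly below the closed convex epigraph is separated from it by a hyperplane, and a vertical
hyperplane is tilted into a non-vertical one by adding a large multiple of it to an affine
minorant. Since the Legendre transform is antitone and turns infima into suprema,
`φ* = ⨅ i, φᵢ*` gives `φ = φ** = ⨆ i, φᵢ** = ⨆ i, φᵢ`, and `φᵢ = φᵢ**` increases with `i`.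
-/

open Filter Topology

/-- `φ : ℝⁿ → (-∞,∞]` is a proper lower semi-continuous convex function. -/
def IsLscConvexFn {n : ℕ} (φ : EuclideanSpace ℝ (Fin n) → EReal) : Prop :=
  LowerSemicontinuous φ ∧ (∀ x, φ x ≠ ⊥) ∧ (∃ x, φ x ≠ ⊤) ∧
    ∀ x y : EuclideanSpace ℝ (Fin n), ∀ a b : ℝ, 0 < a → 0 < b → a + b = 1 →
      φ (a • x + b • y) ≤ (a : EReal) * φ x + (b : EReal) * φ y

/-- The Legendre transform. -/
noncomputable def legendre {n : ℕ} (φ : EuclideanSpace ℝ (Fin n) → EReal)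
    (y : EuclideanSpace ℝ (Fin n)) : EReal :=
  ⨆ x : EuclideanSpace ℝ (Fin n), ((inner ℝ x y : ℝ) : EReal) - φ x

namespace EReal

lemma coe_sub_coe_sub (a : ℝ) (x : EReal) : (a : EReal) - ((a : EReal) - x) = x := by
  induction x using EReal.rec with
  | bot => simp
  | coe b => norm_cast; ring
  | top => simp

lemma coe_sub_le_coe_iff {a c : ℝ} {x : EReal} :
    (a : EReal) - x ≤ c ↔ ((a - c : ℝ) : EReal) ≤ x := by
  induction x using EReal.rec with
  | bot => simpa using (EReal.coe_ne_bot (a - c))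
  | coe b => norm_cast; constructor <;> intro h <;> linarith
  | top => simp

lemma coe_sub_iInf {ι : Sort*} (a : ℝ) (f : ι → EReal) :
    (a : EReal) - ⨅ i, f i = ⨆ i, ((a : EReal) - f i) := by
  refine le_antisymm ?_ (iSup_le fun i => sub_le_sub le_rfl (iInf_le f i))
  have h : (a : EReal) - ⨆ i, ((a : EReal) - f i) ≤ ⨅ i, f i := le_iInf fun i =>
    coe_sub_coe_sub a (f i) ▸ sub_le_sub le_rfl (le_iSup (fun j => (a : EReal) - f j) i)
  simpa only [coe_sub_coe_sub] using sub_le_sub (le_refl (a : EReal)) h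

end EReal

lemma LowerSemicontinuous.isClosed_real_epigraph {α : Type*} [TopologicalSpace α]
    {f : α → EReal} (hf : LowerSemicontinuous f) : IsClosed {p : α × ℝ | f p.1 ≤ p.2} :=
  hf.isClosed_epigraph.preimage (continuous_id.prodMap continuous_coe_real_ereal)

lemma StrongDual.exists_inner_add_mul_eq {E : Type*} [NormedAddCommGroup E]
    [InnerProductSpace ℝ E] [CompleteSpace E] (f : StrongDual ℝ (E × ℝ)) :
    ∃ (v : E) (s : ℝ), ∀ x t, f (x, t) = inner ℝ x v + t * s := by
  refine ⟨(InnerProductSpace.toDual ℝ E).symm (f.comp (.inl ℝ E ℝ)), f (0, 1), fun x t => ?_⟩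
  rw [real_inner_comm, InnerProductSpace.toDual_symm_apply, ← smul_eq_mul, ← map_smul,
    ContinuousLinearMap.comp_apply, ContinuousLinearMap.inl_apply, ← map_add]
  simp

section Legendre

variable {n : ℕ} {φ : EuclideanSpace ℝ (Fin n) → EReal}

lemma legendre_antitone : Antitone (legendre (n := n)) :=
  fun _ _ h _ => iSup_mono fun x => EReal.sub_le_sub le_rfl (h x)

lemma legendre_iInf {ι : Sort*} (f : ι → EuclideanSpace ℝ (Fin n) → EReal) :
    legendre (⨅ i, f i) = ⨆ i, legendre (f i) := by
  ext y
  simp only [legendre, iInf_apply, iSup_apply, EReal.coe_sub_iInf]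
  exact iSup_comm

lemma coe_inner_sub_le_legendre (φ : EuclideanSpace ℝ (Fin n) → EReal)
    (x y : EuclideanSpace ℝ (Fin n)) : ((inner ℝ x y : ℝ) : EReal) - φ x ≤ legendre φ y :=
  le_iSup (fun x => ((inner ℝ x y : ℝ) : EReal) - φ x) x

lemma legendre_legendre_le (φ : EuclideanSpace ℝ (Fin n) → EReal) :
    legendre (legendre φ) ≤ φ := fun x => iSup_le fun y => by
  rw [real_inner_comm, ← EReal.coe_sub_coe_sub (inner ℝ x y) (φ x)]
  exact EReal.sub_le_sub le_rfl (coe_inner_sub_le_legendre φ x y)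

lemma legendre_le_coe_iff {y : EuclideanSpace ℝ (Fin n)} {c : ℝ} :
    legendre φ y ≤ c ↔ ∀ x, ((inner ℝ x y - c : ℝ) : EReal) ≤ φ x := by
  simp only [legendre, iSup_le_iff, EReal.coe_sub_le_coe_iff]

lemma legendre_le_of_separation {v : EuclideanSpace ℝ (Fin n)} {s u : ℝ} (hs : 0 < s)
    (hsep : ∀ x' (t : ℝ), φ x' ≤ t → u < inner ℝ x' v + t * s) :
    legendre φ (-s⁻¹ • v) ≤ ((-(u / s) : ℝ) : EReal) := by
  refine legendre_le_coe_iff.2 fun x' => EReal.le_of_forall_lt_iff_le.1 fun t ht => ?_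
  have := hsep x' t ht.le
  rw [real_inner_smul_right, EReal.coe_le_coe_iff, ← sub_nonneg]
  have key : t - (-s⁻¹ * inner ℝ x' v - -(u / s)) = (inner ℝ x' v + t * s - u) / s := by
    field_simp; ring
  rw [key]
  exact div_nonneg (by linarith) hs.le

lemma legendre_le_of_vertical_separation {y v : EuclideanSpace ℝ (Fin n)} {c u M : ℝ}
    (hy : legendre φ y ≤ c) (hsep : ∀ x' (t : ℝ), φ x' ≤ t → u < inner ℝ x' v) (hM : 0 ≤ M) :
    legendre φ (y - M • v) ≤ ((c - M * u : ℝ) : EReal) := by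
  refine legendre_le_coe_iff.2 fun x' => EReal.le_of_forall_lt_iff_le.1 fun t ht => ?_
  have h₁ := hsep x' t ht.le
  have h₂ := (legendre_le_coe_iff.1 hy x').trans ht.le
  rw [inner_sub_right, real_inner_smul_right, EReal.coe_le_coe_iff] at *
  nlinarith

end Legendre

namespace IsLscConvexFn

variable {n : ℕ} {φ : EuclideanSpace ℝ (Fin n) → EReal}

lemma convex_real_epigraph (hφ : IsLscConvexFn φ) :
    Convex ℝ {p : EuclideanSpace ℝ (Fin n) × ℝ | φ p.1 ≤ p.2} := by
  rintro ⟨x₁, t₁⟩ h₁ ⟨x₂, t₂⟩ h₂ a b ha hb hab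
  simp only [Set.mem_ofPred_eq, Prod.smul_mk, Prod.mk_add_mk, smul_eq_mul] at h₁ h₂ ⊢
  rcases ha.eq_or_lt with rfl | ha
  · simpa [show b = 1 by linarith] using h₂
  rcases hb.eq_or_lt with rfl | hb
  · simpa [show a = 1 by linarith] using h₁
  calc φ (a • x₁ + b • x₂) ≤ (a : EReal) * φ x₁ + (b : EReal) * φ x₂ :=
        hφ.2.2.2 x₁ x₂ a b ha hb hab
    _ ≤ (a : EReal) * t₁ + (b : EReal) * t₂ := by gcongr
    _ = ((a * t₁ + b * t₂ : ℝ) : EReal) := by norm_cast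

/-- The separating hyperplane is non-vertical exactly when `0 < s`. -/
lemma exists_separation (hφ : IsLscConvexFn φ) {x : EuclideanSpace ℝ (Fin n)} {r : ℝ}
    (hr : (r : EReal) < φ x) :
    ∃ (v : EuclideanSpace ℝ (Fin n)) (s u : ℝ), 0 ≤ s ∧ inner ℝ x v + r * s < u ∧
      ∀ x' (t : ℝ), φ x' ≤ t → u < inner ℝ x' v + t * s := by
  obtain ⟨f, u, hfx, hf⟩ := geometric_hahn_banach_point_closed hφ.convex_real_epigraph
    hφ.1.isClosed_real_epigraph (x := (x, r)) (by simpa using hr)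
  obtain ⟨v, s, hfvs⟩ := f.exists_inner_add_mul_eq
  refine ⟨v, s, u, ?_, hfvs x r ▸ hfx, fun x' t ht => hfvs x' t ▸ hf (x', t) ht⟩
  -- `0 ≤ s` since the epigraph is unbounded upwards
  obtain ⟨x₀, hx₀⟩ := hφ.2.2.1
  by_contra! hs
  have hup : φ x₀ ≤ ((max (φ x₀).toReal ((u - inner ℝ x₀ v) / s) : ℝ) : EReal) :=
    (EReal.le_coe_toReal hx₀).trans (EReal.coe_le_coe_iff.2 (le_max_left _ _))
  have := hfvs x₀ _ ▸ hf (x₀, _) hup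
  have := (div_le_iff_of_neg hs).1 (le_max_right (φ x₀).toReal ((u - inner ℝ x₀ v) / s))
  linarith

lemma exists_legendre_le (hφ : IsLscConvexFn φ) :
    ∃ (y : EuclideanSpace ℝ (Fin n)) (c : ℝ), legendre φ y ≤ c := by
  obtain ⟨x₀, hx₀⟩ := hφ.2.2.1
  have hfin : φ x₀ = ((φ x₀).toReal : EReal) := (EReal.coe_toReal hx₀ (hφ.2.1 x₀)).symm
  obtain ⟨v, s, u, hs, hx₀u, hsep⟩ :=
    hφ.exists_separation (r := (φ x₀).toReal - 1) (by rw [hfin]; exact_mod_cast sub_one_lt _)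
  have hs : 0 < s := hs.lt_of_ne fun h => by
    have := hsep x₀ _ hfin.le
    subst h
    linarith
  exact ⟨_, _, legendre_le_of_separation hs hsep⟩

lemma exists_legendre_le_of_lt (hφ : IsLscConvexFn φ) {x : EuclideanSpace ℝ (Fin n)} {r : ℝ}
    (hr : (r : EReal) < φ x) :
    ∃ (y : EuclideanSpace ℝ (Fin n)) (c : ℝ), legendre φ y ≤ c ∧ r ≤ inner ℝ y x - c := by
  obtain ⟨v, s, u, hs, hxu, hsep⟩ := hφ.exists_separation hr
  rcases hs.lt_or_eq with hs | rfl
  · refine ⟨_, _, legendre_le_of_separation hs hsep, ?_⟩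
    rw [real_inner_smul_left, real_inner_comm, ← sub_nonneg]
    have key : -s⁻¹ * inner ℝ x v - -(u / s) - r = (u - (inner ℝ x v + r * s)) / s := by
      field_simp; ring
    rw [key]
    exact div_nonneg (by linarith) hs.le
  · simp only [mul_zero, add_zero] at hxu hsep
    obtain ⟨y₀, c₀, hy₀⟩ := hφ.exists_legendre_le
    -- tilt the affine minorant `⟪·, y₀⟫ - c₀` by a large multiple of `u - ⟪·, v⟫`
    obtain ⟨M, hM₀, hM⟩ : ∃ M : ℝ, 0 ≤ M ∧ r - inner ℝ y₀ x + c₀ ≤ M * (u - inner ℝ x v) :=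
      ⟨_, le_max_left _ _, (div_le_iff₀ (by linarith)).1 (le_max_right _ _)⟩
    refine ⟨_, _, legendre_le_of_vertical_separation hy₀ hsep hM₀, ?_⟩
    rw [inner_sub_left, real_inner_smul_left, real_inner_comm x v]
    linarith

lemma legendre_legendre (hφ : IsLscConvexFn φ) : legendre (legendre φ) = φ := by
  refine le_antisymm (legendre_legendre_le φ) fun x => EReal.ge_of_forall_gt_iff_ge.1 fun r hr => ?_
  obtain ⟨y, c, hy, hrc⟩ := hφ.exists_legendre_le_of_lt hr
  calc (r : EReal) ≤ ((inner ℝ y x - c : ℝ) : EReal) := EReal.coe_le_coe_iff.2 hrc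
    _ ≤ ((inner ℝ y x : ℝ) : EReal) - legendre φ y := by
        rw [EReal.coe_sub]; exact EReal.sub_le_sub le_rfl hy
    _ ≤ legendre (legendre φ) x := coe_inner_sub_le_legendre _ y x

end IsLscConvexFn

/-- If `φ_i* ↓ φ*` pointwise then `φ_i ↑ φ` pointwise. -/
theorem mono_conv_of_conjugate_mono_conv {n : ℕ}
    (φs : ℕ → EuclideanSpace ℝ (Fin n) → EReal)
    (φ : EuclideanSpace ℝ (Fin n) → EReal)
    (hφs : ∀ i, IsLscConvexFn (φs i)) (hφ : IsLscConvexFn φ)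
    (hanti : ∀ y, Antitone fun i => legendre (φs i) y)
    (hconv : ∀ y, Tendsto (fun i => legendre (φs i) y) atTop (nhds (legendre φ y))) :
    ∀ x, (Monotone fun i => φs i x) ∧
      Tendsto (fun i => φs i x) atTop (nhds (φ x)) := by
  intro x
  have hinf : legendre φ = ⨅ i, legendre (φs i) :=
    funext fun y => (tendsto_nhds_unique (hconv y) (tendsto_atTop_iInf (hanti y))).trans
      (iInf_apply ..).symm
  have hmono : Monotone fun i => φs i x := fun i j hij => by
    simpa only [(hφs _).legendre_legendre] using
      legendre_antitone (fun y => hanti y hij) x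
  have hsup : φ x = ⨆ i, φs i x := by
    rw [← hφ.legendre_legendre, hinf, legendre_iInf]
    simp only [iSup_apply, (hφs _).legendre_legendre]
  exact ⟨hmono, hsup ▸ tendsto_atTop_iSup hmono⟩
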